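/- (Classification of marginally trapped general meridian surfaces of parabolic type.) Take f(u) = u on an open interval I ⊂ (0,∞) and g smooth on I with g' < 0, and assume the surface is of general type, i.e. g''(u) ≠ 0 for all u ∈ I (equivalently κ_m ≠ 0) and κ̄(v) ≠ 0 for all v ∈ J. Then the meridian surface of parabolic type is marginally trapped, i.e. ⟨H(u,v),H(u,v)⟩ = 0 for all (u,v) ∈ I × J, if and only if there exist real constants a ≠ 0, b, and c ≠ 0 with c − au > 0 for all u ∈ I, such that κ̄(v)² = a² for all v ∈ J (so κ̄ is constant) and g(u) = (1/(2a³))·((a²u² − 2auc)/(c − au) − 2c·ln(c − au)) + b for all u ∈ I. -/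

import Mathlib

namespace MeridianParabolic

noncomputable section

/-- The Minkowski inner product of signature (3,1) on `ℝ⁴`:
`⟨x,y⟩ = x₁y₁ + x₂y₂ + x₃y₃ − x₄y₄`. -/
def mink (x y : Fin 4 → ℝ) : ℝ := x 0 * y 0 + x 1 * y 1 + x 2 * y 2 - x 3 * y 3

/-- The first standard basis vector `e₁`. -/
def e1 : Fin 4 → ℝ := ![1, 0, 0, 0]

/-- The second standard basis vector `e₂`. -/
def e2 : Fin 4 → ℝ := ![0, 1, 0, 0]

/-- The lightlike vector `ξ₁ = (e₃ + e₄)/√2`. -/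
def xi1 : Fin 4 → ℝ := ![0, 0, 1 / Real.sqrt 2, 1 / Real.sqrt 2]

/-- The lightlike vector `ξ₂ = (−e₃ + e₄)/√2`. -/
def xi2 : Fin 4 → ℝ := ![0, 0, -(1 / Real.sqrt 2), 1 / Real.sqrt 2]

/-- The meridian surface of parabolic type
`z(u,v) = fφ cos v · e₁ + fφ sin v · e₂ + (fφ²/2 + g) ξ₁ + f ξ₂`. -/
def z (f g φ : ℝ → ℝ) (u v : ℝ) : Fin 4 → ℝ :=
  (f u * φ v * Real.cos v) • e1 + (f u * φ v * Real.sin v) • e2 +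
    (f u * (φ v) ^ 2 / 2 + g u) • xi1 + f u • xi2

/-- The partial derivative `z_u`. -/
def zu (f g φ : ℝ → ℝ) (u v : ℝ) : Fin 4 → ℝ := deriv (fun t => z f g φ t v) u

/-- The partial derivative `z_v`. -/
def zv (f g φ : ℝ → ℝ) (u v : ℝ) : Fin 4 → ℝ := deriv (fun t => z f g φ u t) v

/-- The second partial derivative `z_uu`. -/
def zuu (f g φ : ℝ → ℝ) (u v : ℝ) : Fin 4 → ℝ := deriv (fun t => zu f g φ t v) u

/-- The second partial derivative `z_uv`. -/
def zuv (f g φ : ℝ → ℝ) (u v : ℝ) : Fin 4 → ℝ := deriv (fun t => zu f g φ u t) v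

/-- The second partial derivative `z_vv`. -/
def zvv (f g φ : ℝ → ℝ) (u v : ℝ) : Fin 4 → ℝ := deriv (fun t => zv f g φ u t) v

/-- The normal field `n₁ = ((φ̇ sin v + φ cos v) e₁ + (−φ̇ cos v + φ sin v) e₂ + φ² ξ₁)/√(φ̇² + φ²)`. -/
def n1 (φ : ℝ → ℝ) (v : ℝ) : Fin 4 → ℝ :=
  (Real.sqrt ((deriv φ v) ^ 2 + (φ v) ^ 2))⁻¹ •
    ((deriv φ v * Real.sin v + φ v * Real.cos v) • e1 +
      (-(deriv φ v) * Real.cos v + φ v * Real.sin v) • e2 + (φ v) ^ 2 • xi1)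

/-- The normal field `n₂ = √(−f'/(2g')) (φ cos v e₁ + φ sin v e₂ + ((f'φ² − 2g')/(2f')) ξ₁ + ξ₂)`. -/
def n2 (f g φ : ℝ → ℝ) (u v : ℝ) : Fin 4 → ℝ :=
  Real.sqrt (-(deriv f u) / (2 * deriv g u)) •
    ((φ v * Real.cos v) • e1 + (φ v * Real.sin v) • e2 +
      ((deriv f u * (φ v) ^ 2 - 2 * deriv g u) / (2 * deriv f u)) • xi1 + xi2)

/-- The curvature `κ_m(u) = (f'g'' − g'f'')/(−2f'g')^{3/2}` of the meridians. -/
def kappam (f g : ℝ → ℝ) (u : ℝ) : ℝ :=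
  (deriv f u * deriv (deriv g) u - deriv g u * deriv (deriv f) u) /
    (-2 * deriv f u * deriv g u) ^ ((3 : ℝ) / 2)

/-- The curvature `κ̄(v) = (φφ̈ − 2φ̇² − φ²)/(φ̇² + φ²)^{3/2}`. -/
def kappabar (φ : ℝ → ℝ) (v : ℝ) : ℝ :=
  (φ v * deriv (deriv φ) v - 2 * (deriv φ v) ^ 2 - (φ v) ^ 2) /
    ((deriv φ v) ^ 2 + (φ v) ^ 2) ^ ((3 : ℝ) / 2)

/-- The mean curvature vector
`H = (1/2)(⟨z_uu,n₁⟩/E + ⟨z_vv,n₁⟩/G) n₁ − (1/2)(⟨z_uu,n₂⟩/E + ⟨z_vv,n₂⟩/G) n₂`,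
where `E = ⟨z_u,z_u⟩` and `G = ⟨z_v,z_v⟩`. -/
def Hvec (f g φ : ℝ → ℝ) (u v : ℝ) : Fin 4 → ℝ :=
  (1 / 2 * (mink (zuu f g φ u v) (n1 φ v) / mink (zu f g φ u v) (zu f g φ u v) +
      mink (zvv f g φ u v) (n1 φ v) / mink (zv f g φ u v) (zv f g φ u v))) • n1 φ v -
  (1 / 2 * (mink (zuu f g φ u v) (n2 f g φ u v) / mink (zu f g φ u v) (zu f g φ u v) +
      mink (zvv f g φ u v) (n2 f g φ u v) / mink (zv f g φ u v) (zv f g φ u v))) • n2 f g φ u v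

/-!
For `f(u) = u` the mean curvature vector is `H = (κ̄/2u) n₁ − β n₂` with
`β = √(−1/(2g')) (u g'' − 2g')/(4u g')`, where `⟨n₁,n₁⟩ = 1`, `⟨n₂,n₂⟩ = −1`, `⟨n₁,n₂⟩ = 0`.
So `⟨H,H⟩ = 0` separates the variables: `(u g'' − 2g')² = −8 g'³ κ̄(v)²`. Hence `κ̄²` is a
constant `a²`, and `(u g'' − 2g')/(−2g')^{3/2}`, the derivative of `u/√(−2g')`, is continuous
with constant square `a² ≠ 0`, hence constant on the interval `I`. Thus `u/√(−2g') = c − au`,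
i.e. `g' = −u²/(2(c − au)²)`, which integrates to the stated `g`; `g'' ≠ 0` forces `c ≠ 0`.
-/

open Real Topology Set

lemma _root_.ContDiffAt.hasDerivAt_deriv {f : ℝ → ℝ} {x : ℝ} (hf : ContDiffAt ℝ 2 f x) :
    HasDerivAt (deriv f) (deriv (deriv f) x) x :=
  ((hf.derivWithin (m := 1) (by norm_num)).differentiableAt (by simp)).hasDerivAt

section Frame

def frameVec (a b c d : ℝ) : Fin 4 → ℝ := a • e1 + b • e2 + c • xi1 + d • xi2

lemma mink_frameVec (a b c d a' b' c' d' : ℝ) :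
    mink (frameVec a b c d) (frameVec a' b' c' d') = a * a' + b * b' - (c * d' + d * c') := by
  have h2 : √2 ^ 2 = 2 := sq_sqrt (by norm_num)
  simp only [frameVec, mink, e1, e2, xi1, xi2, Pi.add_apply, Pi.smul_apply, smul_eq_mul,
    Matrix.cons_val]
  field_simp
  linear_combination (c * d' + d * c') * h2

lemma mink_comm (x y : Fin 4 → ℝ) : mink x y = mink y x := by
  simp only [mink]; ring

lemma mink_smul_left (k : ℝ) (x y : Fin 4 → ℝ) : mink (k • x) y = k * mink x y := by
  simp only [mink, Pi.smul_apply, smul_eq_mul]; ring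

lemma mink_smul_right (k : ℝ) (x y : Fin 4 → ℝ) : mink x (k • y) = k * mink x y := by
  rw [mink_comm, mink_smul_left, mink_comm]

lemma mink_sub_left (x y w : Fin 4 → ℝ) : mink (x - y) w = mink x w - mink y w := by
  simp only [mink, Pi.sub_apply]; ring

lemma mink_sub_right (x y w : Fin 4 → ℝ) : mink w (x - y) = mink w x - mink w y := by
  rw [mink_comm, mink_sub_left, mink_comm, mink_comm y]

lemma mink_smul_sub_smul_self {n m : Fin 4 → ℝ} (hn : mink n n = 1) (hm : mink m m = -1)
    (hnm : mink n m = 0) (α β : ℝ) :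
    mink (α • n - β • m) (α • n - β • m) = α ^ 2 - β ^ 2 := by
  simp only [mink_sub_left, mink_sub_right, mink_smul_left, mink_smul_right, hn, hm, hnm,
    mink_comm m n]
  ring

lemma hasDerivAt_frameVec {c₁ c₂ c₃ c₄ : ℝ → ℝ} {d₁ d₂ d₃ d₄ t : ℝ}
    (h₁ : HasDerivAt c₁ d₁ t) (h₂ : HasDerivAt c₂ d₂ t)
    (h₃ : HasDerivAt c₃ d₃ t) (h₄ : HasDerivAt c₄ d₄ t) :
    HasDerivAt (fun s => frameVec (c₁ s) (c₂ s) (c₃ s) (c₄ s)) (frameVec d₁ d₂ d₃ d₄) t :=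
  (((h₁.smul_const e1).add (h₂.smul_const e2)).add (h₃.smul_const xi1)).add (h₄.smul_const xi2)

end Frame

section Surface

variable {g φ : ℝ → ℝ}

lemma zu_eq {t : ℝ} (v : ℝ) (hg : DifferentiableAt ℝ g t) :
    zu (fun s => s) g φ t v =
      frameVec (φ v * cos v) (φ v * sin v) (φ v ^ 2 / 2 + deriv g t) 1 := by
  have h₁ : HasDerivAt (fun s : ℝ => s * φ v * cos v) (φ v * cos v) t := by
    simpa using ((hasDerivAt_id t).mul_const (φ v)).mul_const (cos v)
  have h₂ : HasDerivAt (fun s : ℝ => s * φ v * sin v) (φ v * sin v) t := by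
    simpa using ((hasDerivAt_id t).mul_const (φ v)).mul_const (sin v)
  have h₃ : HasDerivAt (fun s : ℝ => s * φ v ^ 2 / 2 + g s) (φ v ^ 2 / 2 + deriv g t) t := by
    simpa [Pi.add_def] using (((hasDerivAt_id t).mul_const (φ v ^ 2)).div_const 2).add hg.hasDerivAt
  exact (hasDerivAt_frameVec h₁ h₂ h₃ (hasDerivAt_id t)).deriv

lemma zv_eq (u : ℝ) {t : ℝ} (hφ : DifferentiableAt ℝ φ t) :
    zv (fun s => s) g φ u t =
      frameVec (u * (deriv φ t * cos t - φ t * sin t)) (u * (deriv φ t * sin t + φ t * cos t))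
        (u * (φ t * deriv φ t)) 0 := by
  have h₁ : HasDerivAt (fun s => u * φ s * cos s) (u * (deriv φ t * cos t - φ t * sin t)) t :=
    ((hφ.hasDerivAt.const_mul u).mul (hasDerivAt_cos t)).congr_deriv (by ring)
  have h₂ : HasDerivAt (fun s => u * φ s * sin s) (u * (deriv φ t * sin t + φ t * cos t)) t :=
    ((hφ.hasDerivAt.const_mul u).mul (hasDerivAt_sin t)).congr_deriv (by ring)
  have h₃ : HasDerivAt (fun s => u * φ s ^ 2 / 2 + g u) (u * (φ t * deriv φ t)) t :=
    ((((hφ.hasDerivAt.pow 2).const_mul u).div_const 2).add_const (g u)).congr_deriv (by ring)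
  exact (hasDerivAt_frameVec h₁ h₂ h₃ (hasDerivAt_const t u)).deriv

lemma zuu_eq {u : ℝ} (v : ℝ) (hg : ContDiffAt ℝ 2 g u) :
    zuu (fun s => s) g φ u v = frameVec 0 0 (deriv (deriv g) u) 0 := by
  have hzu : (fun t => zu (fun s => s) g φ t v) =ᶠ[𝓝 u]
      fun t => frameVec (φ v * cos v) (φ v * sin v) (φ v ^ 2 / 2 + deriv g t) 1 :=
    (hg.eventually (by simp)).mono fun t ht => zu_eq v (ht.differentiableAt (by simp))
  rw [zuu, hzu.deriv_eq]
  exact (hasDerivAt_frameVec (hasDerivAt_const u _) (hasDerivAt_const u _)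
    (hg.hasDerivAt_deriv.const_add _) (hasDerivAt_const u _)).deriv

lemma zvv_eq (u : ℝ) {v : ℝ} (hφ : ContDiffAt ℝ 2 φ v) :
    zvv (fun s => s) g φ u v =
      frameVec (u * (deriv (deriv φ) v * cos v - 2 * deriv φ v * sin v - φ v * cos v))
        (u * (deriv (deriv φ) v * sin v + 2 * deriv φ v * cos v - φ v * sin v))
        (u * (deriv φ v ^ 2 + φ v * deriv (deriv φ) v)) 0 := by
  have hzv : (fun t => zv (fun s => s) g φ u t) =ᶠ[𝓝 v]
      fun t => frameVec (u * (deriv φ t * cos t - φ t * sin t))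
        (u * (deriv φ t * sin t + φ t * cos t)) (u * (φ t * deriv φ t)) 0 :=
    (hφ.eventually (by simp)).mono fun t ht => zv_eq u (ht.differentiableAt (by simp))
  have h₀ : HasDerivAt φ (deriv φ v) v := (hφ.differentiableAt (by simp)).hasDerivAt
  have h₁ : HasDerivAt (deriv φ) (deriv (deriv φ) v) v := hφ.hasDerivAt_deriv
  rw [zvv, hzv.deriv_eq]
  refine (hasDerivAt_frameVec ?_ ?_ ?_ (hasDerivAt_const v 0)).deriv
  · exact (((h₁.mul (hasDerivAt_cos v)).sub (h₀.mul (hasDerivAt_sin v))).const_mul u).congr_deriv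
      (by ring)
  · exact (((h₁.mul (hasDerivAt_sin v)).add (h₀.mul (hasDerivAt_cos v))).const_mul u).congr_deriv
      (by ring)
  · exact ((h₀.mul h₁).const_mul u).congr_deriv (by ring)

lemma n1_eq (v : ℝ) :
    n1 φ v = (√(deriv φ v ^ 2 + φ v ^ 2))⁻¹ •
      frameVec (deriv φ v * sin v + φ v * cos v) (-deriv φ v * cos v + φ v * sin v)
        (φ v ^ 2) 0 := by
  simp [n1, frameVec]

lemma n2_eq (u v : ℝ) :
    n2 (fun s => s) g φ u v = √(-1 / (2 * deriv g u)) •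
      frameVec (φ v * cos v) (φ v * sin v) ((φ v ^ 2 - 2 * deriv g u) / 2) 1 := by
  simp [n2, frameVec]

end Surface

section MeanCurvature

variable {g φ : ℝ → ℝ} {u v : ℝ}

lemma mink_n1_self (hW : 0 < deriv φ v ^ 2 + φ v ^ 2) : mink (n1 φ v) (n1 φ v) = 1 := by
  rw [n1_eq, mink_smul_left, mink_smul_right, mink_frameVec]
  field_simp
  linear_combination (deriv φ v ^ 2 + φ v ^ 2) * sin_sq_add_cos_sq v - sq_sqrt hW.le

lemma mink_n2_self (hg : deriv g u < 0) :
    mink (n2 (fun s => s) g φ u v) (n2 (fun s => s) g φ u v) = -1 := by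
  have hR : √(-1 / (2 * deriv g u)) ^ 2 * (2 * deriv g u) = -1 := by
    rw [sq_sqrt (div_nonneg_of_nonpos (by norm_num) (by linarith))]
    field_simp [hg.ne]
  rw [n2_eq, mink_smul_left, mink_smul_right, mink_frameVec]
  linear_combination √(-1 / (2 * deriv g u)) ^ 2 * φ v ^ 2 * sin_sq_add_cos_sq v + hR

lemma mink_n1_n2 : mink (n1 φ v) (n2 (fun s => s) g φ u v) = 0 := by
  rw [n1_eq, n2_eq, mink_smul_left, mink_smul_right, mink_frameVec]
  linear_combination
    (√(deriv φ v ^ 2 + φ v ^ 2))⁻¹ * √(-1 / (2 * deriv g u)) * φ v ^ 2 * sin_sq_add_cos_sq v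

lemma Hvec_eq (hu : 0 < u) (hgu : deriv g u < 0) (hW : 0 < deriv φ v ^ 2 + φ v ^ 2)
    (hg : ContDiffAt ℝ 2 g u) (hφ : ContDiffAt ℝ 2 φ v) :
    Hvec (fun s => s) g φ u v = (kappabar φ v / (2 * u)) • n1 φ v -
      (√(-1 / (2 * deriv g u)) * (u * deriv (deriv g) u - 2 * deriv g u) / (4 * u * deriv g u)) •
        n2 (fun s => s) g φ u v := by
  have hcs := sin_sq_add_cos_sq v
  have hg₁ : DifferentiableAt ℝ g u := hg.differentiableAt (by simp)
  have hφ₁ : DifferentiableAt ℝ φ v := hφ.differentiableAt (by simp)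
  set W := deriv φ v ^ 2 + φ v ^ 2 with hWdef
  set R := √(-1 / (2 * deriv g u))
  have hE : mink (zu (fun s => s) g φ u v) (zu (fun s => s) g φ u v) = -2 * deriv g u := by
    rw [zu_eq v hg₁, mink_frameVec]
    linear_combination φ v ^ 2 * hcs
  have hG : mink (zv (fun s => s) g φ u v) (zv (fun s => s) g φ u v) = u ^ 2 * W := by
    rw [zv_eq u hφ₁, mink_frameVec]
    linear_combination u ^ 2 * W * hcs
  have hzuu_n1 : mink (zuu (fun s => s) g φ u v) (n1 φ v) = 0 := by
    rw [zuu_eq v hg, n1_eq, mink_smul_right, mink_frameVec]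
    ring
  have hzvv_n1 : mink (zvv (fun s => s) g φ u v) (n1 φ v) =
      u * (φ v * deriv (deriv φ) v - 2 * deriv φ v ^ 2 - φ v ^ 2) / √W := by
    rw [zvv_eq u hφ, n1_eq, mink_smul_right, mink_frameVec, div_eq_inv_mul]
    linear_combination (√W)⁻¹ * u * (φ v * deriv (deriv φ) v - 2 * deriv φ v ^ 2 - φ v ^ 2) * hcs
  have hzuu_n2 : mink (zuu (fun s => s) g φ u v) (n2 (fun s => s) g φ u v) =
      -(R * deriv (deriv g) u) := by
    rw [zuu_eq v hg, n2_eq, mink_smul_right, mink_frameVec]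
    ring
  have hzvv_n2 : mink (zvv (fun s => s) g φ u v) (n2 (fun s => s) g φ u v) = -(R * u * W) := by
    rw [zvv_eq u hφ, n2_eq, mink_smul_right, mink_frameVec]
    linear_combination R * u * (φ v * deriv (deriv φ) v - φ v ^ 2) * hcs
  have hW32 : W ^ ((3 : ℝ) / 2) = √W * W := by
    rw [show (3 : ℝ) / 2 = 1 / 2 + 1 by norm_num, rpow_add hW, rpow_one, sqrt_eq_rpow]
  have hSW : √W ≠ 0 := (sqrt_pos.mpr hW).ne'
  have hu₀ : u ≠ 0 := hu.ne'
  have hgu₀ : deriv g u ≠ 0 := hgu.ne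
  rw [Hvec, hE, hG, hzuu_n1, hzvv_n1, hzuu_n2, hzvv_n2, kappabar, ← hWdef, hW32, zero_div,
    zero_add]
  congr 2
  · field_simp
  · field_simp
    ring

lemma mink_Hvec_self (hu : 0 < u) (hgu : deriv g u < 0) (hW : 0 < deriv φ v ^ 2 + φ v ^ 2)
    (hg : ContDiffAt ℝ 2 g u) (hφ : ContDiffAt ℝ 2 φ v) :
    mink (Hvec (fun s => s) g φ u v) (Hvec (fun s => s) g φ u v) =
      ((u * deriv (deriv g) u - 2 * deriv g u) ^ 2 + 8 * deriv g u ^ 3 * kappabar φ v ^ 2) /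
        (32 * deriv g u ^ 3 * u ^ 2) := by
  rw [Hvec_eq hu hgu hW hg hφ, mink_smul_sub_smul_self (mink_n1_self hW) (mink_n2_self hgu)
    mink_n1_n2, mul_div_assoc, mul_pow, sq_sqrt (div_nonneg_of_nonpos (by norm_num) (by linarith))]
  field_simp [hu.ne', hgu.ne]
  ring

theorem mink_Hvec_self_eq_zero_iff (hu : 0 < u) (hgu : deriv g u < 0)
    (hW : 0 < deriv φ v ^ 2 + φ v ^ 2) (hg : ContDiffAt ℝ 2 g u) (hφ : ContDiffAt ℝ 2 φ v) :
    mink (Hvec (fun s => s) g φ u v) (Hvec (fun s => s) g φ u v) = 0 ↔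
      (u * deriv (deriv g) u - 2 * deriv g u) ^ 2 = -8 * deriv g u ^ 3 * kappabar φ v ^ 2 := by
  have hden : 32 * deriv g u ^ 3 * u ^ 2 ≠ 0 := by
    have := hgu.ne; have := hu.ne'; positivity
  rw [mink_Hvec_self hu hgu hW hg hφ, div_eq_zero_iff, or_iff_left hden, add_eq_zero_iff_eq_neg,
    neg_mul, neg_mul]

end MeanCurvature

section Profile

variable {I : Set ℝ} {g : ℝ → ℝ} {a c : ℝ}

def profile (a c x : ℝ) : ℝ :=
  1 / (2 * a ^ 3) * ((a ^ 2 * x ^ 2 - 2 * a * x * c) / (c - a * x) - 2 * c * log (c - a * x))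

lemma hasDerivAt_profile (ha : a ≠ 0) {t : ℝ} (ht : 0 < c - a * t) :
    HasDerivAt (profile a c) (-t ^ 2 / (2 * (c - a * t) ^ 2)) t := by
  have hlin : HasDerivAt (fun x => c - a * x) (-a) t := by
    simpa using ((hasDerivAt_id t).const_mul a).const_sub c
  have hnum : HasDerivAt (fun x => a ^ 2 * x ^ 2 - 2 * a * x * c) (2 * a ^ 2 * t - 2 * a * c) t :=
    (((hasDerivAt_pow 2 t).const_mul (a ^ 2)).sub
      (((hasDerivAt_id t).const_mul (2 * a)).mul_const c)).congr_deriv (by ring)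
  have h := ((hnum.div hlin ht.ne').sub ((hlin.log ht.ne').const_mul (2 * c))).const_mul
    (1 / (2 * a ^ 3))
  refine h.congr_deriv ?_
  field_simp
  ring

lemma hasDerivAt_neg_sq_div_sq {t : ℝ} (ht : c - a * t ≠ 0) :
    HasDerivAt (fun x => -x ^ 2 / (2 * (c - a * x) ^ 2)) (-(t * c) / (c - a * t) ^ 3) t := by
  have hlin : HasDerivAt (fun x => c - a * x) (-a) t := by
    simpa using ((hasDerivAt_id t).const_mul a).const_sub c
  have hnum : HasDerivAt (fun x : ℝ => -x ^ 2) (-(2 * t)) t :=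
    (hasDerivAt_pow 2 t).neg.congr_deriv (by norm_num)
  have hden : HasDerivAt (fun x => 2 * (c - a * x) ^ 2) (2 * (2 * (c - a * t) * -a)) t := by
    simpa using (hlin.pow 2).const_mul 2
  refine (hnum.div hden (mul_ne_zero two_ne_zero (pow_ne_zero 2 ht))).congr_deriv ?_
  field_simp
  ring

lemma deriv_eq_of_eqOn_profile (hI : IsOpen I) (ha : a ≠ 0) (hD : ∀ u ∈ I, 0 < c - a * u) {b : ℝ}
    (hg : EqOn g (profile a c · + b) I) :
    EqOn (deriv g) (fun x => -x ^ 2 / (2 * (c - a * x) ^ 2)) I := fun u hu => by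
  rw [(hg.eventuallyEq_of_mem (hI.mem_nhds hu)).deriv_eq]
  exact ((hasDerivAt_profile ha (hD u hu)).add_const b).deriv

lemma exists_eqOn_profile (hI : IsOpen I) (hI' : IsPreconnected I) (ha : a ≠ 0)
    (hD : ∀ u ∈ I, 0 < c - a * u) (hg : DifferentiableOn ℝ g I)
    (hg' : EqOn (deriv g) (fun x => -x ^ 2 / (2 * (c - a * x) ^ 2)) I) :
    ∃ b, EqOn g (profile a c · + b) I :=
  hI.exists_eq_add_of_deriv_eq hI' hg
    (fun u hu => (hasDerivAt_profile ha (hD u hu)).differentiableAt.differentiableWithinAt)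
    fun u hu => (hg' hu).trans (hasDerivAt_profile ha (hD u hu)).deriv.symm

lemma deriv_deriv_eq_of_eqOn (hI : IsOpen I)
    (hg : EqOn (deriv g) (fun x => -x ^ 2 / (2 * (c - a * x) ^ 2)) I) {u : ℝ} (hu : u ∈ I)
    (hD : c - a * u ≠ 0) : deriv (deriv g) u = -(u * c) / (c - a * u) ^ 3 := by
  rw [(hg.eventuallyEq_of_mem (hI.mem_nhds hu)).deriv_eq]
  exact (hasDerivAt_neg_sq_div_sq hD).deriv

lemma sq_eq_of_eqOn_deriv (hI : IsOpen I)
    (hg : EqOn (deriv g) (fun x => -x ^ 2 / (2 * (c - a * x) ^ 2)) I) {u : ℝ} (hu : u ∈ I)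
    (hD : c - a * u ≠ 0) :
    (u * deriv (deriv g) u - 2 * deriv g u) ^ 2 = -8 * deriv g u ^ 3 * a ^ 2 := by
  rw [hg hu, deriv_deriv_eq_of_eqOn hI hg hu hD]
  field_simp
  ring

end Profile

lemma hasDerivAt_div_sqrt {p : ℝ → ℝ} {p' t : ℝ} (hp : HasDerivAt p p' t) (ht : 0 < p t) :
    HasDerivAt (fun x => x / √(p x)) ((2 * p t - t * p') / (2 * p t * √(p t))) t := by
  have hS : √(p t) ≠ 0 := (sqrt_pos.mpr ht).ne'
  refine ((hasDerivAt_id' t).div (hp.sqrt ht.ne') hS).congr_deriv ?_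
  field_simp
  rw [sq_sqrt ht.le]
  ring

theorem exists_deriv_eq_of_sq_eq {I : Set ℝ} {g : ℝ → ℝ} {k : ℝ} (hI : IsOpen I)
    (hI' : IsPreconnected I) (hIpos : I ⊆ Ioi 0) (hg : ContDiffOn ℝ 2 g I)
    (hgd : ∀ u ∈ I, deriv g u < 0) (hk : k ≠ 0)
    (hode : ∀ u ∈ I, (u * deriv (deriv g) u - 2 * deriv g u) ^ 2 = -8 * deriv g u ^ 3 * k ^ 2) :
    ∃ a c, a ^ 2 = k ^ 2 ∧
      ∀ u ∈ I, 0 < c - a * u ∧ deriv g u = -u ^ 2 / (2 * (c - a * u) ^ 2) := by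
  set ψ : ℝ → ℝ := fun u =>
    (u * deriv (deriv g) u - 2 * deriv g u) / (-2 * deriv g u * √(-2 * deriv g u))
  have hF : ∀ u ∈ I, HasDerivAt (fun x => x / √(-2 * deriv g x)) (ψ u) u := fun u hu => by
    have hgu := hgd u hu
    refine (hasDerivAt_div_sqrt ((hg.contDiffAt (hI.mem_nhds hu)).hasDerivAt_deriv.const_mul (-2))
      (by linarith)).congr_deriv ?_
    have : √(-2 * deriv g u) ≠ 0 := (sqrt_pos.mpr (by linarith)).ne'
    simp only [ψ]
    field_simp
    ring
  have hψcont : ContinuousOn ψ I := by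
    have hg₁ : ContinuousOn (deriv g) I := hg.continuousOn_deriv_of_isOpen hI (by norm_num)
    have hg₂ : ContinuousOn (deriv (deriv g)) I :=
      (hg.deriv_of_isOpen hI (m := 1) (by norm_num)).continuousOn_deriv_of_isOpen hI le_rfl
    refine ContinuousOn.div (by fun_prop) (by fun_prop) fun u hu => ?_
    have : 0 < -2 * deriv g u := by linarith [hgd u hu]
    positivity
  have hψsq : ∀ u ∈ I, ψ u ^ 2 = k ^ 2 := fun u hu => by
    have hgu := (hgd u hu).ne
    rw [div_pow, mul_pow, sq_sqrt (by linarith [hgd u hu]), hode u hu]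
    field_simp
    ring
  obtain ⟨A, hA, hψA⟩ : ∃ A, A ^ 2 = k ^ 2 ∧ EqOn ψ (fun _ => A) I := by
    rcases hI'.eq_or_eq_neg_of_sq_eq hψcont continuousOn_const (fun u hu => hψsq u hu)
      (fun _ => hk) with h | h
    · exact ⟨k, rfl, h⟩
    · exact ⟨-k, neg_sq k, h⟩
  obtain ⟨c, hc⟩ := hI.exists_eq_add_of_deriv_eq hI'
    (fun u hu => (hF u hu).differentiableAt.differentiableWithinAt)
    (g := fun x => A * x) (by fun_prop)
    fun u hu => (hF u hu).deriv.trans ((hψA hu).trans (by simp))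
  refine ⟨-A, c, by rw [neg_sq, hA], fun u hu => ?_⟩
  have hu₀ : 0 < u := hIpos hu
  have hgu : 0 < -2 * deriv g u := by linarith [hgd u hu]
  have hFu : u / √(-2 * deriv g u) = c - -A * u := (hc hu).trans (by ring)
  have hpos : 0 < c - -A * u := hFu ▸ by positivity
  refine ⟨hpos, ?_⟩
  rw [div_eq_iff (sqrt_pos.mpr hgu).ne'] at hFu
  have hsq := congrArg (· ^ 2) hFu
  simp only [mul_pow, sq_sqrt hgu.le] at hsq
  rw [eq_div_iff (by have := hpos.ne'; positivity)]
  linear_combination hsq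

theorem statement8_general
    (I J : Set ℝ) (hIopen : IsOpen I) (hIconn : IsPreconnected I) (hIne : I.Nonempty)
    (hIpos : I ⊆ Set.Ioi (0 : ℝ))
    (hJopen : IsOpen J) (hJne : J.Nonempty)
    (g φ : ℝ → ℝ)
    (hg : ContDiffOn ℝ (⊤ : ℕ∞) g I) (hφ : ContDiffOn ℝ (⊤ : ℕ∞) φ J)
    (hgd : ∀ u ∈ I, deriv g u < 0)
    (hgdd : ∀ u ∈ I, deriv (deriv g) u ≠ 0)
    (hφpos : ∀ v ∈ J, 0 < (deriv φ v) ^ 2 + (φ v) ^ 2)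
    (hκbar : ∀ v ∈ J, kappabar φ v ≠ 0) :
    (∀ u ∈ I, ∀ v ∈ J,
        mink (Hvec (fun t => t) g φ u v) (Hvec (fun t => t) g φ u v) = 0) ↔
      ∃ a b c : ℝ, a ≠ 0 ∧ c ≠ 0 ∧ (∀ u ∈ I, 0 < c - a * u) ∧
        (∀ v ∈ J, (kappabar φ v) ^ 2 = a ^ 2) ∧
        ∀ u ∈ I, g u =
          1 / (2 * a ^ 3) *
            ((a ^ 2 * u ^ 2 - 2 * a * u * c) / (c - a * u) -
              2 * c * Real.log (c - a * u)) + b := by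
  obtain ⟨u₀, hu₀⟩ := hIne
  obtain ⟨v₀, hv₀⟩ := hJne
  have hg₂ : ContDiffOn ℝ 2 g I := hg.of_le (WithTop.coe_le_coe.2 le_top)
  have hφ₂ : ContDiffOn ℝ 2 φ J := hφ.of_le (WithTop.coe_le_coe.2 le_top)
  have htrapped : ∀ u ∈ I, ∀ v ∈ J,
      (mink (Hvec (fun t => t) g φ u v) (Hvec (fun t => t) g φ u v) = 0 ↔
        (u * deriv (deriv g) u - 2 * deriv g u) ^ 2 = -8 * deriv g u ^ 3 * kappabar φ v ^ 2) :=
    fun u hu v hv => mink_Hvec_self_eq_zero_iff (hIpos hu) (hgd u hu) (hφpos v hv)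
      (hg₂.contDiffAt (hIopen.mem_nhds hu)) (hφ₂.contDiffAt (hJopen.mem_nhds hv))
  constructor
  · intro hH
    have hode u (hu : u ∈ I) v (hv : v ∈ J) := (htrapped u hu v hv).1 (hH u hu v hv)
    have hκ : ∀ v ∈ J, kappabar φ v ^ 2 = kappabar φ v₀ ^ 2 := fun v hv =>
      mul_left_cancel₀ (by have := (hgd u₀ hu₀).ne; positivity)
        ((hode u₀ hu₀ v hv).symm.trans (hode u₀ hu₀ v₀ hv₀))
    obtain ⟨a, c, ha, hgc⟩ := exists_deriv_eq_of_sq_eq hIopen hIconn hIpos hg₂ hgd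
      (hκbar v₀ hv₀) fun u hu => hode u hu v₀ hv₀
    have ha₀ : a ≠ 0 := by
      rintro rfl
      exact hκbar v₀ hv₀ (by simpa using ha.symm)
    have hg' : EqOn (deriv g) (fun x => -x ^ 2 / (2 * (c - a * x) ^ 2)) I :=
      fun u hu => (hgc u hu).2
    obtain ⟨b, hb⟩ := exists_eqOn_profile hIopen hIconn ha₀ (fun u hu => (hgc u hu).1)
      (hg₂.differentiableOn (by norm_num)) hg'
    refine ⟨a, b, c, ha₀, ?_, fun u hu => (hgc u hu).1, fun v hv => by rw [hκ v hv, ha],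
      fun u hu => hb hu⟩
    rintro rfl
    apply hgdd u₀ hu₀
    rw [deriv_deriv_eq_of_eqOn hIopen hg' hu₀ (hgc u₀ hu₀).1.ne']
    simp
  · rintro ⟨a, b, c, ha, -, hD, hκ, hgb⟩ u hu v hv
    rw [htrapped u hu v hv, hκ v hv]
    exact sq_eq_of_eqOn_deriv hIopen
      (deriv_eq_of_eqOn_profile hIopen ha hD (b := b) fun x hx => hgb x hx) hu (hD u hu).ne'

/-- classification of marginally trapped general meridian surfaces of
parabolic type: with `f(u) = u` on `I ⊂ (0,∞)`, `g' < 0`, `g'' ≠ 0` (i.e. `κ_m ≠ 0`)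
and `κ̄ ≠ 0`, the meridian surface of parabolic type is marginally trapped if and only if
there exist constants `a ≠ 0`, `b`, `c ≠ 0` with `c − au > 0` on `I` such that
`κ̄² = a²` on `J` and
`g(u) = (1/(2a³))((a²u² − 2auc)/(c − au) − 2c ln(c − au)) + b` on `I`. -/
theorem statement8
    (I J : Set ℝ) (hIopen : IsOpen I) (hIconn : IsPreconnected I) (hIne : I.Nonempty)
    (hIpos : I ⊆ Set.Ioi (0 : ℝ))
    (hJopen : IsOpen J) (hJconn : IsPreconnected J) (hJne : J.Nonempty)
    (g φ : ℝ → ℝ)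
    (hg : ContDiffOn ℝ (⊤ : ℕ∞) g I) (hφ : ContDiffOn ℝ (⊤ : ℕ∞) φ J)
    (hgd : ∀ u ∈ I, deriv g u < 0)
    (hgdd : ∀ u ∈ I, deriv (deriv g) u ≠ 0)
    (hφpos : ∀ v ∈ J, 0 < (deriv φ v) ^ 2 + (φ v) ^ 2)
    (hκbar : ∀ v ∈ J, kappabar φ v ≠ 0) :
    (∀ u ∈ I, ∀ v ∈ J,
        mink (Hvec (fun t => t) g φ u v) (Hvec (fun t => t) g φ u v) = 0) ↔
      ∃ a b c : ℝ, a ≠ 0 ∧ c ≠ 0 ∧ (∀ u ∈ I, 0 < c - a * u) ∧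
        (∀ v ∈ J, (kappabar φ v) ^ 2 = a ^ 2) ∧
        ∀ u ∈ I, g u =
          1 / (2 * a ^ 3) *
            ((a ^ 2 * u ^ 2 - 2 * a * u * c) / (c - a * u) -
              2 * c * Real.log (c - a * u)) + b :=
  statement8_general I J hIopen hIconn hIne hIpos hJopen hJne g φ hg hφ hgd hgdd hφpos hκbar

end
end MeridianParabolic
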